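/- Let f₁ = X³ + Y³ + 3X²Z + 3Y²Z + 3XZ² + 3YZ² + 2Z³ and f₂ = X³ + XY² + X²Z + 2XYZ + 3Y²Z + 4XZ² + 2YZ² + 2Z³ in ℤ[X,Y,Z]. Then f₁ ≠ f₂, and f₁(A₂, C₂, G₂) = f₂(A₂, C₂, G₂) in ℤ[[q]] (i.e., at level ℓ = 7), while for every even integer d > 2 one has f₁(A_d, C_d, G_d) ≠ f₂(A_d, C_d, G_d) (i.e., the theta series differ at every level ℓ ≡ 7 mod 8 with ℓ > 7). -/

import Mathlib

/-!
Since `f₁ - f₂ = (Y - X)(Y² + Z² - 2XZ)` and `C ≠ A`, the question is whether `C² + G² = 2AG`.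

For `d = 2`, `Q₂` is the norm form of `x + yω` on `ℤ[ω]`, `ω = (1 + √-7)/2`. Division by `ω`
halves norms, so by the parallelogram law `(P, R) ↦ (P/ω + R/ω, P/ω - R/ω)` preserves
`Q(P) + Q(R)`; it maps `A×G ∪ G×A` bijectively onto `C×C ∪ G×G`, whence `2AG = C² + G²`.

For `d ≥ 3`, a vector with odd second coordinate has norm at least `d`, so `G = O(q³)`, while
`A` has nonzero constant term and `C = c₁q + O(q²)` with `c₁ ≠ 0`. Hence `C ≠ A` and the
`q²`-coefficient of `C² + G² - 2AG` is `c₁² ≠ 0`; as `ℤ[[q]]` is a domain, the product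
`(C - A)(C² + G² - 2AG)` does not vanish.
-/

noncomputable section

/-- The positive definite quadratic form `Q_d(x,y) = x² + xy + d y²`. -/
def Qform (d : ℕ) (x y : ℤ) : ℤ := x ^ 2 + x * y + (d : ℤ) * y ^ 2

/-- The coset theta series `θ^{(2,d)}_{a,b}`. -/
def cosetTheta (d : ℕ) (a b : ℤ) : PowerSeries ℤ :=
  PowerSeries.mk fun k =>
    (Set.ncard {mn : ℤ × ℤ |
      Qform d (2 * mn.1 + a) (2 * mn.2 + b) = (k : ℤ)} : ℤ)

/-- `A_d = θ^{(2,d)}_{0,0}`. -/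
def Az (d : ℕ) : PowerSeries ℤ := cosetTheta d 0 0
/-- `C_d = θ^{(2,d)}_{1,0}`. -/
def Cz (d : ℕ) : PowerSeries ℤ := cosetTheta d 1 0
/-- `G_d = θ^{(2,d)}_{0,1}`. -/
def Gz (d : ℕ) : PowerSeries ℤ := cosetTheta d 0 1

open MvPolynomial in
/-- `f₁ = X³ + Y³ + 3X²Z + 3Y²Z + 3XZ² + 3YZ² + 2Z³`. -/
def f1 : MvPolynomial (Fin 3) ℤ :=
  X 0 ^ 3 + X 1 ^ 3 + 3 * X 0 ^ 2 * X 2 + 3 * X 1 ^ 2 * X 2 +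
    3 * X 0 * X 2 ^ 2 + 3 * X 1 * X 2 ^ 2 + 2 * X 2 ^ 3

open MvPolynomial in
/-- `f₂ = X³ + XY² + X²Z + 2XYZ + 3Y²Z + 4XZ² + 2YZ² + 2Z³`. -/
def f2 : MvPolynomial (Fin 3) ℤ :=
  X 0 ^ 3 + X 0 * X 1 ^ 2 + X 0 ^ 2 * X 2 + 2 * X 0 * X 1 * X 2 +
    3 * X 1 ^ 2 * X 2 + 4 * X 0 * X 2 ^ 2 + 2 * X 1 * X 2 ^ 2 + 2 * X 2 ^ 3

open PowerSeries Finset.HasAntidiagonal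

section ThetaSeries

variable {α β : Type*}

def thetaSeries (N : α → ℤ) (s : Set α) : PowerSeries ℤ :=
  PowerSeries.mk fun k => ({x ∈ s | N x = k}.ncard : ℤ)

lemma coeff_thetaSeries (N : α → ℤ) (s : Set α) (k : ℕ) :
    coeff k (thetaSeries N s) = ({x ∈ s | N x = k}.ncard : ℤ) :=
  coeff_mk _ _

lemma thetaSeries_eq_of_bijOn {N : α → ℤ} {M : β → ℤ} {s : Set α} {t : Set β} {f : α → β}
    (hf : Set.BijOn f s t) (hN : ∀ x ∈ s, M (f x) = N x) :
    thetaSeries N s = thetaSeries M t := by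
  ext k
  simp only [coeff_thetaSeries]
  congr 1
  refine Set.BijOn.ncard_eq ⟨fun x hx => ⟨hf.mapsTo hx.1, by rw [hN x hx.1, hx.2]⟩,
    hf.injOn.mono fun x hx => hx.1, fun y hy => ?_⟩
  obtain ⟨x, hx, rfl⟩ := hf.surjOn hy.1
  exact ⟨x, ⟨hx, by rw [← hN x hx, hy.2]⟩, rfl⟩

lemma thetaSeries_union {N : α → ℤ} {s t : Set α} (hst : Disjoint s t)
    (hs : ∀ k : ℕ, {x ∈ s | N x = k}.Finite) (ht : ∀ k : ℕ, {x ∈ t | N x = k}.Finite) :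
    thetaSeries N (s ∪ t) = thetaSeries N s + thetaSeries N t := by
  ext k
  have hsplit : {x ∈ s ∪ t | N x = k} = {x ∈ s | N x = k} ∪ {x ∈ t | N x = k} := Set.sep_union
  rw [map_add, coeff_thetaSeries, coeff_thetaSeries, coeff_thetaSeries, hsplit,
    Set.ncard_union_eq (hst.mono (Set.sep_subset _ _) (Set.sep_subset _ _)) (hs k) (ht k)]
  push_cast; rfl

variable {N : α → ℤ} {M : β → ℤ} {s : Set α} {t : Set β}

lemma sep_prod_eq_biUnion (hN : ∀ x ∈ s, 0 ≤ N x) (hM : ∀ y ∈ t, 0 ≤ M y) (k : ℕ) :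
    {p ∈ s ×ˢ t | N p.1 + M p.2 = k} =
      ⋃ ij ∈ (antidiagonal k : Set (ℕ × ℕ)), {x ∈ s | N x = ij.1} ×ˢ {y ∈ t | M y = ij.2} := by
  ext ⟨x, y⟩
  simp only [Set.mem_ofPred_eq, Set.mem_prod, Set.mem_iUnion, Finset.mem_coe, mem_antidiagonal,
    exists_prop, Prod.exists]
  constructor
  · rintro ⟨⟨hx, hy⟩, hk⟩
    have := hN x hx
    have := hM y hy
    exact ⟨(N x).toNat, (M y).toNat, by omega, ⟨hx, by omega⟩, ⟨hy, by omega⟩⟩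
  · rintro ⟨i, j, hij, ⟨hx, hi⟩, ⟨hy, hj⟩⟩
    exact ⟨⟨hx, hy⟩, by rw [hi, hj, ← hij]; push_cast; rfl⟩

lemma finite_sep_prod (hN : ∀ x ∈ s, 0 ≤ N x) (hM : ∀ y ∈ t, 0 ≤ M y)
    (hs : ∀ k : ℕ, {x ∈ s | N x = k}.Finite) (ht : ∀ k : ℕ, {y ∈ t | M y = k}.Finite) (k : ℕ) :
    {p ∈ s ×ˢ t | N p.1 + M p.2 = k}.Finite := by
  rw [sep_prod_eq_biUnion hN hM]
  exact (Finset.finite_toSet _).biUnion fun ij _ => (hs ij.1).prod (ht ij.2)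

lemma thetaSeries_mul (hN : ∀ x ∈ s, 0 ≤ N x) (hM : ∀ y ∈ t, 0 ≤ M y)
    (hs : ∀ k : ℕ, {x ∈ s | N x = k}.Finite) (ht : ∀ k : ℕ, {y ∈ t | M y = k}.Finite) :
    thetaSeries N s * thetaSeries M t = thetaSeries (fun p => N p.1 + M p.2) (s ×ˢ t) := by
  ext k
  have hdisj : (antidiagonal k : Set (ℕ × ℕ)).PairwiseDisjoint
      fun ij => {x ∈ s | N x = ij.1} ×ˢ {y ∈ t | M y = ij.2} := by
    rintro ⟨i, j⟩ - ⟨i', j'⟩ - hne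
    refine Set.disjoint_left.mpr fun p hp hp' => hne ?_
    simp only [Set.mem_prod, Set.mem_ofPred_eq] at hp hp'
    have hi : (i : ℤ) = i' := hp.1.2.symm.trans hp'.1.2
    have hj : (j : ℤ) = j' := hp.2.2.symm.trans hp'.2.2
    simp only [Prod.mk.injEq]
    omega
  rw [coeff_mul, coeff_thetaSeries, sep_prod_eq_biUnion hN hM,
    (Finset.finite_toSet _).ncard_biUnion (fun ij _ => (hs ij.1).prod (ht ij.2)) hdisj,
    finsum_mem_coe_finset]
  push_cast
  refine Finset.sum_congr rfl fun ij _ => ?_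
  rw [coeff_thetaSeries, coeff_thetaSeries, Set.ncard_prod]
  push_cast; rfl

end ThetaSeries

section QuadraticForm

variable {d : ℕ}

def qf (d : ℕ) (v : ℤ × ℤ) : ℤ := Qform d v.1 v.2

def parityClass (a b : ℤ) : Set (ℤ × ℤ) := {v | v.1 ≡ a [ZMOD 2] ∧ v.2 ≡ b [ZMOD 2]}

lemma four_mul_qform (d : ℕ) (x y : ℤ) :
    4 * Qform d x y = (2 * x + y) ^ 2 + (4 * d - 1) * y ^ 2 := by
  unfold Qform; ring

lemma qform_nonneg (hd : 1 ≤ d) (x y : ℤ) : 0 ≤ Qform d x y := by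
  have h := four_mul_qform d x y
  have : (1 : ℤ) ≤ d := by exact_mod_cast hd
  nlinarith [sq_nonneg (2 * x + y), sq_nonneg y]

lemma qform_eq_zero (hd : 1 ≤ d) {x y : ℤ} (h : Qform d x y = 0) : x = 0 ∧ y = 0 := by
  have h4 := four_mul_qform d x y
  have : (1 : ℤ) ≤ d := by exact_mod_cast hd
  have hy : y = 0 := by nlinarith [sq_nonneg (2 * x + y), sq_nonneg y]
  subst hy
  exact ⟨by nlinarith, rfl⟩

lemma le_qform_of_odd (hd : 1 ≤ d) (x : ℤ) {y : ℤ} (hy : Odd y) : (d : ℤ) ≤ Qform d x y := by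
  have h4 := four_mul_qform d x y
  have : (1 : ℤ) ≤ d := by exact_mod_cast hd
  have hy0 : y ≠ 0 := by rintro rfl; exact Int.not_odd_zero hy
  have hy2 : 0 < y ^ 2 := by positivity
  have : 4 * (d : ℤ) - 1 ≤ 4 * Qform d x y := by nlinarith [sq_nonneg (2 * x + y)]
  omega

lemma finite_qf_fiber (hd : 1 ≤ d) (k : ℤ) : {v | qf d v = k}.Finite := by
  refine (Set.finite_Icc (-4 * k, -4 * k) (4 * k, 4 * k)).subset fun v hv => ?_
  obtain ⟨x, y⟩ := v
  have h4 := four_mul_qform d x y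
  have : (1 : ℤ) ≤ d := by exact_mod_cast hd
  simp only [Set.mem_ofPred_eq, qf] at hv
  rw [hv] at h4
  have hy : |y| ≤ 4 * k := by nlinarith [Int.le_self_sq |y|, sq_abs y, sq_nonneg (2 * x + y)]
  have hxy : |2 * x + y| ≤ 4 * k := by
    nlinarith [Int.le_self_sq |2 * x + y|, sq_abs (2 * x + y), sq_nonneg y]
  simp only [Set.mem_Icc, Prod.mk_le_mk]
  constructor <;> constructor <;> cases abs_le.mp hy <;> cases abs_le.mp hxy <;> omega

lemma finite_sep_parityClass (hd : 1 ≤ d) (a b : ℤ) (k : ℕ) :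
    {v ∈ parityClass a b | qf d v = k}.Finite :=
  (finite_qf_fiber hd k).subset fun _ hv => hv.2

lemma finite_sep_parityClass_prod (hd : 1 ≤ d) (a b a' b' : ℤ) (k : ℕ) :
    {p ∈ parityClass a b ×ˢ parityClass a' b' | qf d p.1 + qf d p.2 = k}.Finite :=
  finite_sep_prod (fun _ _ => qform_nonneg hd _ _) (fun _ _ => qform_nonneg hd _ _)
    (finite_sep_parityClass hd a b) (finite_sep_parityClass hd a' b') k

lemma disjoint_parityClass_prod {a b a' b' : ℤ} {t t' : Set (ℤ × ℤ)}
    (h : ¬ (a ≡ a' [ZMOD 2] ∧ b ≡ b' [ZMOD 2])) :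
    Disjoint (parityClass a b ×ˢ t) (parityClass a' b' ×ˢ t') :=
  Set.disjoint_left.mpr fun _ hp hp' => h ⟨hp.1.1.symm.trans hp'.1.1, hp.1.2.symm.trans hp'.1.2⟩

lemma cosetTheta_eq_thetaSeries (a b : ℤ) :
    cosetTheta d a b = thetaSeries (qf d) (parityClass a b) := by
  have hbij : Set.BijOn (fun mn : ℤ × ℤ => (2 * mn.1 + a, 2 * mn.2 + b)) Set.univ
      (parityClass a b) := by
    refine ⟨fun mn _ => ?_, fun mn _ mn' _ h => ?_, fun v hv => ?_⟩
    · simp only [parityClass, Set.mem_ofPred_eq, Int.ModEq]; omega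
    · simp only [Prod.mk.injEq] at h; ext <;> omega
    · simp only [parityClass, Set.mem_ofPred_eq, Int.ModEq] at hv
      exact ⟨((v.1 - a) / 2, (v.2 - b) / 2), trivial, by ext <;> dsimp only <;> omega⟩
  rw [← thetaSeries_eq_of_bijOn hbij fun _ _ => rfl]
  ext k
  simp only [cosetTheta, coeff_mk, coeff_thetaSeries, Set.mem_univ, true_and]
  rfl

lemma coeff_cosetTheta_eq_zero {a b : ℤ} {k : ℕ} (h : ∀ v ∈ parityClass a b, qf d v ≠ k) :
    coeff k (cosetTheta d a b) = 0 := by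
  have hempty : {v ∈ parityClass a b | qf d v = k} = ∅ :=
    Set.eq_empty_of_forall_notMem fun v hv => h v hv.1 hv.2
  rw [cosetTheta_eq_thetaSeries, coeff_thetaSeries, hempty, Set.ncard_empty, Nat.cast_zero]

lemma coeff_cosetTheta_ne_zero (hd : 1 ≤ d) {a b : ℤ} {k : ℕ} {v : ℤ × ℤ}
    (hv : v ∈ parityClass a b) (hk : qf d v = k) : coeff k (cosetTheta d a b) ≠ 0 := by
  rw [cosetTheta_eq_thetaSeries, coeff_thetaSeries, Nat.cast_ne_zero]
  exact ((Set.ncard_pos (finite_sep_parityClass hd a b k)).mpr ⟨v, hv, hk⟩).ne'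

lemma cosetTheta_mul (hd : 1 ≤ d) (a b a' b' : ℤ) :
    cosetTheta d a b * cosetTheta d a' b' =
      thetaSeries (fun p => qf d p.1 + qf d p.2) (parityClass a b ×ˢ parityClass a' b') := by
  rw [cosetTheta_eq_thetaSeries, cosetTheta_eq_thetaSeries]
  exact thetaSeries_mul (fun v _ => qform_nonneg hd _ _) (fun v _ => qform_nonneg hd _ _)
    (finite_sep_parityClass hd a b) (finite_sep_parityClass hd a' b')

end QuadraticForm

section LevelSeven

-- `(x, y)` stands for `x + yω ∈ ℤ[ω]`, `ω² = ω - 2`, so that `qf 2` is the norm; division by `ω`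
-- is exact when `x` is even.
def divOmega (v : ℤ × ℤ) : ℤ × ℤ := (v.1 / 2 + v.2, -(v.1 / 2))

def mulOmega (v : ℤ × ℤ) : ℤ × ℤ := (-2 * v.2, v.1 + v.2)

lemma two_mul_qf_divOmega {v : ℤ × ℤ} (hv : Even v.1) : 2 * qf 2 (divOmega v) = qf 2 v := by
  obtain ⟨⟨x, y⟩, ⟨m, hm⟩⟩ := v, hv
  obtain rfl : x = m + m := hm
  simp only [divOmega, qf, Qform, show (m + m) / 2 = m by omega]
  push_cast; ring

lemma qf_add_add_qf_sub (d : ℕ) (v w : ℤ × ℤ) :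
    qf d (v + w) + qf d (v - w) = 2 * (qf d v + qf d w) := by
  simp only [qf, Qform, Prod.fst_add, Prod.snd_add, Prod.fst_sub, Prod.snd_sub]
  ring

def rotatePair (p : (ℤ × ℤ) × (ℤ × ℤ)) : (ℤ × ℤ) × (ℤ × ℤ) :=
  (divOmega p.1 + divOmega p.2, divOmega p.1 - divOmega p.2)

def unrotatePair (p : (ℤ × ℤ) × (ℤ × ℤ)) : (ℤ × ℤ) × (ℤ × ℤ) :=
  (mulOmega ((p.1 + p.2) / 2), mulOmega ((p.1 - p.2) / 2))

lemma bijOn_rotatePair :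
    Set.BijOn rotatePair
      (parityClass 0 0 ×ˢ parityClass 0 1 ∪ parityClass 0 1 ×ˢ parityClass 0 0)
      (parityClass 1 0 ×ˢ parityClass 1 0 ∪ parityClass 0 1 ×ˢ parityClass 0 1) := by
  refine Set.InvOn.bijOn (f' := unrotatePair) ⟨fun p hp => ?_, fun p hp => ?_⟩ (fun p hp => ?_)
    (fun p hp => ?_) <;>
  simp only [parityClass, Int.ModEq, Set.mem_union, Set.mem_prod, Set.mem_ofPred_eq, rotatePair,
    unrotatePair, divOmega, mulOmega, Prod.ext_iff, Prod.fst_add, Prod.snd_add, Prod.fst_sub,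
    Prod.snd_sub, Prod.fst_div, Prod.snd_div, Prod.fst_ofNat, Prod.snd_ofNat] at hp ⊢ <;>
  omega

lemma qf_rotatePair {p : (ℤ × ℤ) × (ℤ × ℤ)} (h₁ : Even p.1.1) (h₂ : Even p.2.1) :
    qf 2 (rotatePair p).1 + qf 2 (rotatePair p).2 = qf 2 p.1 + qf 2 p.2 := by
  rw [rotatePair, qf_add_add_qf_sub, mul_add, two_mul_qf_divOmega h₁, two_mul_qf_divOmega h₂]

lemma Cz_two_sq_add_Gz_two_sq : Cz 2 ^ 2 + Gz 2 ^ 2 = 2 * Az 2 * Gz 2 := by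
  have hfin := finite_sep_parityClass_prod (d := 2) one_le_two
  have hpairs : Cz 2 * Cz 2 + Gz 2 * Gz 2 = Az 2 * Gz 2 + Gz 2 * Az 2 := by
    simp only [Az, Cz, Gz, cosetTheta_mul one_le_two]
    rw [← thetaSeries_union (disjoint_parityClass_prod (by decide)) (hfin _ _ _ _) (hfin _ _ _ _),
      ← thetaSeries_union (disjoint_parityClass_prod (by decide)) (hfin _ _ _ _) (hfin _ _ _ _)]
    refine (thetaSeries_eq_of_bijOn bijOn_rotatePair fun p hp => ?_).symm
    rcases hp with ⟨⟨h₁, -⟩, h₂, -⟩ | ⟨⟨h₁, -⟩, h₂, -⟩ <;>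
      exact qf_rotatePair (Int.even_iff.mpr h₁) (Int.even_iff.mpr h₂)
  linear_combination hpairs

end LevelSeven

section HigherLevel

variable {d : ℕ}

lemma coeff_zero_Az_ne_zero (hd : 1 ≤ d) : coeff 0 (Az d) ≠ 0 :=
  coeff_cosetTheta_ne_zero hd (v := (0, 0)) ⟨rfl, rfl⟩ (by simp [qf, Qform])

lemma coeff_zero_Cz (hd : 1 ≤ d) : coeff 0 (Cz d) = 0 :=
  coeff_cosetTheta_eq_zero fun v hv h0 => by
    have hx := (qform_eq_zero hd (x := v.1) (y := v.2) (by exact_mod_cast h0)).1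
    exact absurd (hx ▸ hv.1 : (0 : ℤ) ≡ 1 [ZMOD 2]) (by decide)

lemma coeff_one_Cz_ne_zero (hd : 1 ≤ d) : coeff 1 (Cz d) ≠ 0 :=
  coeff_cosetTheta_ne_zero hd (v := (1, 0)) ⟨rfl, rfl⟩ (by simp [qf, Qform])

lemma coeff_Gz_of_lt (hd : 1 ≤ d) {k : ℕ} (hk : k < d) : coeff k (Gz d) = 0 :=
  coeff_cosetTheta_eq_zero fun v hv h => by
    have := le_qform_of_odd hd v.1 (Int.odd_iff.mpr hv.2)
    rw [qf] at h
    omega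

lemma Cz_ne_Az (hd : 1 ≤ d) : Cz d ≠ Az d := fun h =>
  coeff_zero_Az_ne_zero hd (h ▸ coeff_zero_Cz hd)

lemma Cz_sq_add_Gz_sq_ne (hd : 3 ≤ d) : Cz d ^ 2 + Gz d ^ 2 ≠ 2 * Az d * Gz d := fun h => by
  have hC0 := coeff_zero_Cz (d := d) (by omega)
  have hG0 := coeff_Gz_of_lt (d := d) (k := 0) (by omega) (by omega)
  have hG1 := coeff_Gz_of_lt (d := d) (k := 1) (by omega) (by omega)
  have hG2 := coeff_Gz_of_lt (d := d) (k := 2) (by omega) (by omega)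
  rw [coeff_zero_eq_constantCoeff_apply] at hC0 hG0
  have h2 := congrArg (coeff 2) h
  simp only [pow_two, map_add, coeff_mul, Finset.Nat.sum_antidiagonal_succ,
    coeff_zero_eq_constantCoeff, hC0, Nat.reduceAdd, zero_mul, zero_add, antidiagonal_zero,
    Finset.sum_singleton, mul_zero, add_zero, hG0, hG2, hG1, mul_eq_zero, or_self] at h2
  exact coeff_one_Cz_ne_zero (by omega) h2

end HigherLevel

open MvPolynomial in
lemma aeval_f1_sub_aeval_f2 {R : Type*} [CommRing R] [Algebra ℤ R] (a b c : R) :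
    aeval ![a, b, c] f1 - aeval ![a, b, c] f2 = (b - a) * (b ^ 2 + c ^ 2 - 2 * a * c) := by
  simp only [f1, f2, map_add, map_mul, map_pow, map_ofNat, aeval_X, Matrix.cons_val_zero,
    Matrix.cons_val_one, Matrix.cons_val_two, Matrix.tail_cons, Matrix.head_cons]
  ring

theorem stmt11 :
    f1 ≠ f2 ∧
    MvPolynomial.aeval ![Az 2, Cz 2, Gz 2] f1 =
      MvPolynomial.aeval ![Az 2, Cz 2, Gz 2] f2 ∧
    (∀ d : ℕ, 2 < d → Even d →
      MvPolynomial.aeval ![Az d, Cz d, Gz d] f1 ≠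
        MvPolynomial.aeval ![Az d, Cz d, Gz d] f2) := by
  refine ⟨fun h => ?_, ?_, fun d hd _ => ?_⟩
  · have := aeval_f1_sub_aeval_f2 (0 : ℤ) 1 0
    rw [h, sub_self] at this
    norm_num at this
  · rw [← sub_eq_zero, aeval_f1_sub_aeval_f2]
    linear_combination (Cz 2 - Az 2) * Cz_two_sq_add_Gz_two_sq
  · rw [← sub_ne_zero, aeval_f1_sub_aeval_f2]
    exact mul_ne_zero (sub_ne_zero.mpr (Cz_ne_Az (by omega)))
      (sub_ne_zero.mpr (Cz_sq_add_Gz_sq_ne hd))
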